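/- Let β > 0, Z(a) = Σ_{n=0}^{∞} (n + a)^{−(1+β)} for real a ≥ 1, P_k = Z(k+1)/Z(k), and R₁⁺ ∈ ℝ. Then for every t ≥ 2 the reversion amplitude R_t⁻ := (1/t)·(P₁⋯P_{t−1})⁻¹·R₁⁺ admits the closed form R_t⁻ = (1/t)·Z(1)/Z(t)·R₁⁺, and it satisfies lim_{t→∞} t^{1−β}·R_t⁻ = β·Z(1)·R₁⁺. -/

import Mathlib

/-!
Comparing each term `(n + t) ^ (-s)` with the difference `(n + t) ^ (1 - s) - (n + t + 1) ^ (1 - s)`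
(mean value theorem) and telescoping squeezes `ζ(s, t)` between `t ^ (1 - s) / (s - 1)` and
`t ^ (-s) + t ^ (1 - s) / (s - 1)`, so `t ^ (s - 1) ζ(s, t) → 1 / (s - 1)`. The product
`P₁ ⋯ P_{t-1}` telescopes to `Z(t) / Z(1)`, which gives the closed form, and then
`t ^ (1 - β) R_t⁻ = Z(1) R₁⁺ / (t ^ β Z(t)) → β Z(1) R₁⁺`.
-/

open Filter Topology Finset

lemma prod_Ico_div_of_ne_zero {G₀ : Type*} [CommGroupWithZero G₀] {f : ℕ → G₀} {m n : ℕ}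
    (hf : ∀ k, m ≤ k → f k ≠ 0) (hmn : m ≤ n) :
    ∏ k ∈ Ico m n, f (k + 1) / f k = f n / f m := by
  induction n, hmn using Nat.le_induction with
  | base => rw [Ico_self, prod_empty, div_self (hf m le_rfl)]
  | succ n hmn ih => rw [prod_Ico_succ_top hmn, ih, mul_comm, div_mul_div_cancel₀ (hf n hmn)]

lemma Antitone.hasSum_sub_succ {f : ℕ → ℝ} (hf : Antitone f) {c : ℝ}
    (hc : Tendsto f atTop (𝓝 c)) : HasSum (fun n ↦ f n - f (n + 1)) (f 0 - c) := by
  rw [hasSum_iff_tendsto_nat_of_nonneg (fun n ↦ sub_nonneg.2 (hf n.le_succ))]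
  simpa only [sum_range_sub'] using tendsto_const_nhds.sub hc

/-- `ζ(s, a)` for real `a > 0`; Mathlib's `HurwitzZeta.hurwitzZeta` only takes `a` modulo `1`. -/
noncomputable def hurwitzZetaReal (s a : ℝ) : ℝ := ∑' n : ℕ, ((n : ℝ) + a) ^ (-s)

section hurwitzZetaReal

variable {s a : ℝ}

lemma summable_nat_add_rpow_neg (hs : 1 < s) (ha : 0 < a) :
    Summable fun n : ℕ ↦ ((n : ℝ) + a) ^ (-s) := by
  refine ((Real.summable_one_div_nat_add_rpow a s).2 hs).congr fun n ↦ ?_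
  have hna : 0 < (n : ℝ) + a := by positivity
  rw [abs_of_pos hna, Real.rpow_neg hna.le, one_div]

lemma hurwitzZetaReal_eq_rpow_add (hs : 1 < s) (ha : 0 < a) :
    hurwitzZetaReal s a = a ^ (-s) + hurwitzZetaReal s (a + 1) := by
  unfold hurwitzZetaReal
  rw [(summable_nat_add_rpow_neg hs ha).tsum_eq_zero_add]
  congr 1
  · simp
  · exact tsum_congr fun n ↦ by push_cast; ring_nf

lemma rpow_one_sub_sub_rpow_one_sub_bounds (hs : 1 < s) (ha : 0 < a) :
    (s - 1) * (a + 1) ^ (-s) ≤ a ^ (1 - s) - (a + 1) ^ (1 - s) ∧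
      a ^ (1 - s) - (a + 1) ^ (1 - s) ≤ (s - 1) * a ^ (-s) := by
  obtain ⟨c, ⟨hac, hca⟩, hc⟩ := exists_hasDerivAt_eq_slope (fun x : ℝ ↦ x ^ (1 - s))
    (fun x ↦ (1 - s) * x ^ (1 - s - 1)) (lt_add_one a)
    (fun x hx ↦
      (Real.continuousAt_rpow_const x _ (Or.inl (by linarith [hx.1]))).continuousWithinAt)
    (fun x hx ↦ Real.hasDerivAt_rpow_const (Or.inl (by linarith [hx.1])))
  have hdiff : a ^ (1 - s) - (a + 1) ^ (1 - s) = (s - 1) * c ^ (-s) := by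
    rw [add_sub_cancel_left, div_one, sub_sub_cancel_left] at hc
    linarith
  rw [hdiff]
  have hs' : 0 < s - 1 := by linarith
  exact ⟨mul_le_mul_of_nonneg_left
      (Real.rpow_le_rpow_of_nonpos (by linarith) hca.le (by linarith)) hs'.le,
    mul_le_mul_of_nonneg_left (Real.rpow_le_rpow_of_nonpos ha hac.le (by linarith)) hs'.le⟩

lemma hasSum_rpow_one_sub_sub_rpow_one_sub (hs : 1 < s) (ha : 0 < a) :
    HasSum (fun n : ℕ ↦ ((n : ℝ) + a) ^ (1 - s) - ((n : ℝ) + a + 1) ^ (1 - s)) (a ^ (1 - s)) := by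
  have hanti : Antitone fun n : ℕ ↦ ((n : ℝ) + a) ^ (1 - s) := fun m n hmn ↦
    Real.rpow_le_rpow_of_nonpos (by positivity) (by gcongr) (by linarith)
  have hlim : Tendsto (fun n : ℕ ↦ ((n : ℝ) + a) ^ (1 - s)) atTop (𝓝 0) := by
    rw [← neg_sub]
    exact (tendsto_rpow_neg_atTop (by linarith)).comp
      (tendsto_atTop_add_const_right _ a tendsto_natCast_atTop_atTop)
  convert hanti.hasSum_sub_succ hlim using 1
  · ext n
    push_cast
    ring_nf
  · simp

lemma rpow_one_sub_le_mul_hurwitzZetaReal (hs : 1 < s) (ha : 0 < a) :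
    a ^ (1 - s) ≤ (s - 1) * hurwitzZetaReal s a := by
  rw [hurwitzZetaReal, ← tsum_mul_left]
  exact (hasSum_rpow_one_sub_sub_rpow_one_sub hs ha).tsum_eq ▸
    Summable.tsum_le_tsum (fun n ↦ (rpow_one_sub_sub_rpow_one_sub_bounds hs (by positivity)).2)
      (hasSum_rpow_one_sub_sub_rpow_one_sub hs ha).summable
      ((summable_nat_add_rpow_neg hs ha).mul_left _)

lemma mul_hurwitzZetaReal_add_one_le (hs : 1 < s) (ha : 0 < a) :
    (s - 1) * hurwitzZetaReal s (a + 1) ≤ a ^ (1 - s) := by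
  rw [hurwitzZetaReal, ← tsum_mul_left]
  refine (hasSum_rpow_one_sub_sub_rpow_one_sub hs ha).tsum_eq ▸
    Summable.tsum_le_tsum (fun n ↦ ?_) ((summable_nat_add_rpow_neg hs (by linarith)).mul_left _)
      (hasSum_rpow_one_sub_sub_rpow_one_sub hs ha).summable
  rw [← add_assoc]
  exact (rpow_one_sub_sub_rpow_one_sub_bounds hs (by positivity)).1

lemma hurwitzZetaReal_pos (hs : 1 < s) (ha : 0 < a) : 0 < hurwitzZetaReal s a :=
  pos_of_mul_pos_right ((Real.rpow_pos_of_pos ha _).trans_le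
    (rpow_one_sub_le_mul_hurwitzZetaReal hs ha)) (by linarith)

lemma rpow_sub_one_mul_rpow_one_sub (ha : 0 < a) : a ^ (s - 1) * a ^ (1 - s) = 1 := by
  rw [← Real.rpow_add ha, sub_add_sub_cancel', sub_self, Real.rpow_zero]

lemma inv_sub_one_le_rpow_mul_hurwitzZetaReal (hs : 1 < s) (ha : 0 < a) :
    (s - 1)⁻¹ ≤ a ^ (s - 1) * hurwitzZetaReal s a := by
  have hs' : 0 < s - 1 := by linarith
  calc (s - 1)⁻¹ = a ^ (s - 1) * a ^ (1 - s) / (s - 1) := by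
        rw [rpow_sub_one_mul_rpow_one_sub ha, one_div]
    _ ≤ a ^ (s - 1) * ((s - 1) * hurwitzZetaReal s a) / (s - 1) := by
        gcongr
        exact rpow_one_sub_le_mul_hurwitzZetaReal hs ha
    _ = a ^ (s - 1) * hurwitzZetaReal s a := by field_simp

lemma rpow_mul_hurwitzZetaReal_le (hs : 1 < s) (ha : 0 < a) :
    a ^ (s - 1) * hurwitzZetaReal s a ≤ a⁻¹ + (s - 1)⁻¹ := by
  have hs' : 0 < s - 1 := by linarith
  have htail : hurwitzZetaReal s (a + 1) ≤ a ^ (1 - s) / (s - 1) := by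
    rw [le_div_iff₀ hs', mul_comm]
    exact mul_hurwitzZetaReal_add_one_le hs ha
  calc a ^ (s - 1) * hurwitzZetaReal s a
      = a⁻¹ + a ^ (s - 1) * hurwitzZetaReal s (a + 1) := by
        rw [hurwitzZetaReal_eq_rpow_add hs ha, mul_add, ← Real.rpow_add ha,
          show s - 1 + -s = -1 by ring, Real.rpow_neg_one]
    _ ≤ a⁻¹ + a ^ (s - 1) * (a ^ (1 - s) / (s - 1)) := by gcongr
    _ = a⁻¹ + (s - 1)⁻¹ := by rw [mul_div_assoc', rpow_sub_one_mul_rpow_one_sub ha, one_div]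

lemma tendsto_rpow_mul_hurwitzZetaReal (hs : 1 < s) :
    Tendsto (fun t ↦ t ^ (s - 1) * hurwitzZetaReal s t) atTop (𝓝 (s - 1)⁻¹) :=
  tendsto_of_tendsto_of_tendsto_of_le_of_le' tendsto_const_nhds
    (by simpa using tendsto_inv_atTop_zero.add_const (s - 1)⁻¹)
    (eventually_gt_atTop 0 |>.mono fun _ ↦ inv_sub_one_le_rpow_mul_hurwitzZetaReal hs)
    (eventually_gt_atTop 0 |>.mono fun _ ↦ rpow_mul_hurwitzZetaReal_le hs)

end hurwitzZetaReal

/-- With `Z a = ∑_{n≥0} (n+a)^{−(1+β)}` and `P_k = Z(k+1)/Z(k)`,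
the reversion amplitude `R_t⁻ = (1/t)·(P₁⋯P_{t−1})⁻¹·R₁⁺` admits the closed
form `R_t⁻ = (1/t)·Z(1)/Z(t)·R₁⁺` and satisfies
`lim_{t→∞} t^{1−β}·R_t⁻ = β·Z(1)·R₁⁺`. -/
theorem stmt_18 (β : ℝ) (hβ : 0 < β)
    (Z : ℝ → ℝ)
    (hZ : ∀ a : ℝ, 1 ≤ a → Z a = ∑' n : ℕ, ((n : ℝ) + a) ^ (-(1 + β)))
    (P : ℕ → ℝ) (hP : ∀ k : ℕ, 1 ≤ k → P k = Z ((k : ℝ) + 1) / Z k)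
    (R₁ : ℝ) (Rm : ℕ → ℝ)
    (hRm : ∀ t : ℕ, 2 ≤ t →
      Rm t = (1 / (t : ℝ)) * (∏ k ∈ Finset.Icc 1 (t - 1), P k)⁻¹ * R₁) :
    (∀ t : ℕ, 2 ≤ t → Rm t = (1 / (t : ℝ)) * (Z 1 / Z t) * R₁) ∧
      Filter.Tendsto (fun t : ℕ => (t : ℝ) ^ (1 - β) * Rm t)
        Filter.atTop (nhds (β * Z 1 * R₁)) := by
  have hs : 1 < 1 + β := by linarith
  have hZζ : ∀ t : ℕ, 1 ≤ t → Z t = hurwitzZetaReal (1 + β) t := fun t ht ↦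
    hZ t (by exact_mod_cast ht)
  have hZne : ∀ k : ℕ, 1 ≤ k → Z k ≠ 0 := fun k hk ↦ by
    rw [hZζ k hk]
    exact (hurwitzZetaReal_pos hs (by positivity)).ne'
  have hclosed : ∀ t : ℕ, 2 ≤ t → Rm t = (1 / (t : ℝ)) * (Z 1 / Z t) * R₁ := by
    intro t ht
    have hprod : ∏ k ∈ Icc 1 (t - 1), P k = Z t / Z 1 := by
      rw [← Ico_add_one_right_eq_Icc, Nat.sub_add_cancel (by omega : 1 ≤ t),
        prod_congr rfl fun k hk ↦ hP k (mem_Ico.1 hk).1]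
      exact_mod_cast prod_Ico_div_of_ne_zero (f := fun k : ℕ ↦ Z k) hZne (by omega : 1 ≤ t)
    rw [hRm t ht, hprod, inv_div]
  refine ⟨hclosed, ?_⟩
  have hlim : Tendsto (fun t : ℕ ↦ (t : ℝ) ^ β * Z t) atTop (𝓝 β⁻¹) := by
    have := (tendsto_rpow_mul_hurwitzZetaReal hs).comp tendsto_natCast_atTop_atTop
    rw [add_sub_cancel_left] at this
    refine this.congr' ?_
    filter_upwards [eventually_ge_atTop 1] with t ht
    simp [hZζ t ht]
  have hinv := (hlim.inv₀ (by positivity)).const_mul (Z 1 * R₁)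
  rw [inv_inv, mul_comm (Z 1 * R₁), ← mul_assoc] at hinv
  refine hinv.congr' ?_
  filter_upwards [eventually_ge_atTop 2] with t ht
  have ht0 : (0 : ℝ) < t := by positivity
  rw [hclosed t ht, Real.rpow_sub ht0, Real.rpow_one]
  field_simp
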